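/- Define, for points P = ((rho1+|z1|^2)/2 + i t1, z1) and R = ((rho2+|z2|^2)/2 + i t2, z2) in the Siegel domain (rho1, rho2 > 0), the point-pair function delta(P,R) = [(rho1 + rho2 + |z1 - z2|^2)^2 + 4(t2 - t1 + Im(z1 conj(z2)))^2 + 4 rho1 rho2] / (8 rho1 rho2). Then for Q = (1/2, 0) (i.e. rho = 1, t = 0, z = 0), the triangle-type inequality delta(P,R) <= 72 · delta(P,Q) · delta(Q,R) holds for all such P, R. -/

import Mathlib

open Complex

/-! Writing `a = (1 + ρ₁ + |z₁|²)²/4` and `b = (1 + ρ₂ + |z₂|²)²/4`, one has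
`2ρ₁ δ(P,Q) = a + t₁² + ρ₁` and `2ρ₂ δ(Q,R) = b + t₂² + ρ₂`, so after clearing denominators the
claim says that the numerator of `δ(P,R)` is at most `144 (a + t₁² + ρ₁)(b + t₂² + ρ₂)`.
Each term of that numerator is bounded by monomials of this product: `|z₁ - z₂|² ≤ 2|z₁|² + 2|z₂|²`
gives `(ρ₁ + ρ₂ + |z₁ - z₂|²)² ≤ 64ab`, the Heisenberg term `Im(z₁ z̄₂)` is bounded by
`|z₁||z₂|` with `|z|² ≤ a`, and `a, b ≥ 1/4` absorbs the lone `t₁²`, `t₂²`. -/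

/-- The point-pair function `δ(P,R)` at `P = (ρ1, t1, z1)`, `R = (ρ2, t2, z2)` in horospherical
coordinates; the base point `Q = (1/2, 0)` is `(1, 0, 0)`. -/
noncomputable def siegelDelta (ρ1 t1 : ℝ) (z1 : ℂ) (ρ2 t2 : ℝ) (z2 : ℂ) : ℝ :=
  ((ρ1 + ρ2 + ‖z1 - z2‖ ^ 2) ^ 2 + 4 * (t2 - t1 + (z1 * (starRingEnd ℂ) z2).im) ^ 2
    + 4 * ρ1 * ρ2) / (8 * ρ1 * ρ2)

theorem siegelDelta_one_zero_zero_left (ρ t : ℝ) (z : ℂ) :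
    siegelDelta 1 0 0 ρ t z = ((1 + ρ + ‖z‖ ^ 2) ^ 2 / 4 + t ^ 2 + ρ) / (2 * ρ) := by
  simp only [siegelDelta, zero_sub, norm_neg, zero_mul, zero_im, add_zero]
  ring

theorem siegelDelta_one_zero_zero_right (ρ t : ℝ) (z : ℂ) :
    siegelDelta ρ t z 1 0 0 = ((1 + ρ + ‖z‖ ^ 2) ^ 2 / 4 + t ^ 2 + ρ) / (2 * ρ) := by
  simp only [siegelDelta, sub_zero, map_zero, mul_zero, zero_im, add_zero]
  ring

theorem norm_sub_sq_le {E : Type*} [SeminormedAddGroup E] (a b : E) :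
    ‖a - b‖ ^ 2 ≤ 2 * (‖a‖ ^ 2 + ‖b‖ ^ 2) :=
  (pow_le_pow_left₀ (norm_nonneg _) (norm_sub_le a b) 2).trans add_sq_le

theorem sq_im_mul_conj_le (z w : ℂ) : (z * (starRingEnd ℂ) w).im ^ 2 ≤ ‖z‖ ^ 2 * ‖w‖ ^ 2 := by
  rw [← mul_pow, ← norm_conj w, ← norm_mul, ← sq_abs]
  exact pow_le_pow_left₀ (abs_nonneg _) (abs_im_le_norm _) 2

theorem sq_le_sq_one_add_add_sq_div_four {ρ : ℝ} (hρ : 0 ≤ ρ) (x : ℝ) :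
    x ^ 2 ≤ (1 + ρ + x ^ 2) ^ 2 / 4 := by
  nlinarith [sq_nonneg (1 - x ^ 2), sq_nonneg x]

theorem one_div_four_le_sq_one_add_add_sq_div_four {ρ : ℝ} (hρ : 0 ≤ ρ) (x : ℝ) :
    1 / 4 ≤ (1 + ρ + x ^ 2) ^ 2 / 4 := by
  have : 1 ≤ 1 + ρ + x ^ 2 := by nlinarith [sq_nonneg x]
  nlinarith

theorem add_add_sq_le_two_mul {ρ1 ρ2 : ℝ} (hρ1 : 0 ≤ ρ1) (hρ2 : 0 ≤ ρ2) (x y c : ℝ)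
    (hc : c ^ 2 ≤ 2 * (x ^ 2 + y ^ 2)) :
    ρ1 + ρ2 + c ^ 2 ≤ 2 * ((1 + ρ1 + x ^ 2) * (1 + ρ2 + y ^ 2)) := by
  nlinarith [mul_nonneg (add_nonneg hρ1 (sq_nonneg x)) (add_nonneg hρ2 (sq_nonneg y))]

theorem add_four_mul_sq_add_le {a b ρ1 ρ2 t1 t2 s u : ℝ} (ha : 1 / 4 ≤ a) (hb : 1 / 4 ≤ b)
    (hρ1 : 0 ≤ ρ1) (hρ2 : 0 ≤ ρ2) (hu : u ≤ 64 * (a * b)) (hs : s ^ 2 ≤ a * b) :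
    u + 4 * (t2 - t1 + s) ^ 2 + 4 * ρ1 * ρ2 ≤ 144 * ((a + t1 ^ 2 + ρ1) * (b + t2 ^ 2 + ρ2)) := by
  have h3 : (t2 - t1 + s) ^ 2 ≤ 3 * (t1 ^ 2 + t2 ^ 2 + s ^ 2) := by
    nlinarith [sq_nonneg (t2 + t1), sq_nonneg (t1 + s), sq_nonneg (t2 - s)]
  have ht1 : t1 ^ 2 ≤ 4 * (t1 ^ 2 * b) := by nlinarith [sq_nonneg t1]
  have ht2 : t2 ^ 2 ≤ 4 * (t2 ^ 2 * a) := by nlinarith [sq_nonneg t2]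
  have ha0 : 0 ≤ a := by linarith
  have hb0 : 0 ≤ b := by linarith
  nlinarith [mul_nonneg ha0 hb0, mul_nonneg ha0 hρ2, mul_nonneg hρ1 hb0, mul_nonneg hρ1 hρ2,
    mul_nonneg (sq_nonneg t1) hb0, mul_nonneg ha0 (sq_nonneg t2), mul_nonneg hρ1 (sq_nonneg t2),
    mul_nonneg (sq_nonneg t1) hρ2, mul_nonneg (sq_nonneg t1) (sq_nonneg t2)]

theorem siegelDelta_le (ρ1 ρ2 t1 t2 : ℝ) (z1 z2 : ℂ) (hρ1 : 0 < ρ1) (hρ2 : 0 < ρ2) :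
    siegelDelta ρ1 t1 z1 ρ2 t2 z2 ≤ 72 * siegelDelta ρ1 t1 z1 1 0 0 * siegelDelta 1 0 0 ρ2 t2 z2 := by
  rw [siegelDelta_one_zero_zero_right, siegelDelta_one_zero_zero_left, siegelDelta]
  set a := (1 + ρ1 + ‖z1‖ ^ 2) ^ 2 / 4
  set b := (1 + ρ2 + ‖z2‖ ^ 2) ^ 2 / 4
  have hfactor : 72 * ((a + t1 ^ 2 + ρ1) / (2 * ρ1)) * ((b + t2 ^ 2 + ρ2) / (2 * ρ2))
      = 144 * ((a + t1 ^ 2 + ρ1) * (b + t2 ^ 2 + ρ2)) / (8 * ρ1 * ρ2) := by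
    field_simp
    ring
  have hsum_sq : (ρ1 + ρ2 + ‖z1 - z2‖ ^ 2) ^ 2 ≤ 64 * (a * b) := by
    calc (ρ1 + ρ2 + ‖z1 - z2‖ ^ 2) ^ 2
        ≤ (2 * ((1 + ρ1 + ‖z1‖ ^ 2) * (1 + ρ2 + ‖z2‖ ^ 2))) ^ 2 := by
          gcongr; exact add_add_sq_le_two_mul hρ1.le hρ2.le _ _ _ (norm_sub_sq_le z1 z2)
      _ = 64 * (a * b) := by ring
  have him : (z1 * (starRingEnd ℂ) z2).im ^ 2 ≤ a * b :=
    (sq_im_mul_conj_le z1 z2).trans <| mul_le_mul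
      (sq_le_sq_one_add_add_sq_div_four hρ1.le _) (sq_le_sq_one_add_add_sq_div_four hρ2.le _)
      (sq_nonneg _) (by positivity)
  rw [hfactor]
  gcongr
  exact add_four_mul_sq_add_le (one_div_four_le_sq_one_add_add_sq_div_four hρ1.le _)
    (one_div_four_le_sq_one_add_add_sq_div_four hρ2.le _) hρ1.le hρ2.le hsum_sq him

/-- Triangle-type inequality `δ(P,R) ≤ 72 δ(P,Q) δ(Q,R)` for the point-pair
function `δ` on the Siegel domain, with `Q = (1/2, 0)`, in horospherical
coordinates `P = ((ρ₁+|z₁|²)/2 + it₁, z₁)`, `R = ((ρ₂+|z₂|²)/2 + it₂, z₂)`. -/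
theorem delta_triangle (ρ1 ρ2 t1 t2 : ℝ) (z1 z2 : ℂ)
    (hρ1 : 0 < ρ1) (hρ2 : 0 < ρ2) :
    ((ρ1 + ρ2 + ‖z1 - z2‖ ^ 2) ^ 2
        + 4 * (t2 - t1 + (z1 * (starRingEnd ℂ) z2).im) ^ 2 + 4 * ρ1 * ρ2)
      / (8 * ρ1 * ρ2)
    ≤ 72 * (((1 + ρ1 + ‖z1‖ ^ 2) ^ 2 / 4 + t1 ^ 2 + ρ1) / (2 * ρ1))
         * (((1 + ρ2 + ‖z2‖ ^ 2) ^ 2 / 4 + t2 ^ 2 + ρ2) / (2 * ρ2)) := by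
  have h := siegelDelta_le ρ1 ρ2 t1 t2 z1 z2 hρ1 hρ2
  rwa [siegelDelta_one_zero_zero_right, siegelDelta_one_zero_zero_left] at h
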